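/- arXiv:1909.09428 — 5 statements merged into one kernel-verified Lean document; each statement's English description precedes it below -/
import Mathlib

section
/- Let a : ℕ → ℕ satisfy a(1) = 1, a(2) = 1, and a(n) = 2*a(n-1) + Σ_{k=2}^{n-1} a(k-1)*a(n-k) for n ≥ 3. Then for all n ≥ 2, a(n) ≥ 2^(n-2), i.e., a grows at least exponentially with base 2. -/
theorem stmt_3 (a : ℕ → ℕ) (h1 : a 1 = 1) (h2 : a 2 = 1)
    (hrec : ∀ n, 3 ≤ n →
      a n = 2 * a (n - 1) + ∑ k ∈ Finset.Icc 2 (n - 1), a (k - 1) * a (n - k)) :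
    ∀ n, 2 ≤ n → 2 ^ (n - 2) ≤ a n := by
  intro n hn
  induction n, hn using Nat.le_induction with
  | base => simp [h2]
  | succ n hn ih =>
    have h3 : 3 ≤ n + 1 := by omega
    have := hrec (n + 1) h3
    simp only [Nat.add_sub_cancel] at this
    have hle : 2 * 2 ^ (n - 2) ≤ a (n + 1) := by
      rw [this]
      have : 2 * 2 ^ (n - 2) ≤ 2 * a n := by
        exact Nat.mul_le_mul_left 2 ih
      omega
    calc 2 ^ (n + 1 - 2) = 2 * 2 ^ (n - 2) := by
          rw [← pow_succ']
          congr 1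
          omega
      _ ≤ a (n + 1) := hle
end

section
/- Let a : ℕ → ℕ satisfy a(1) = 1, a(2) = 1, and a(n) = 2*a(n-1) + Σ_{k=2}^{n-1} a(k-1)*a(n-k) for n ≥ 3. Then for all n ≥ 1, a(n) ≤ 4^n, so a grows at most exponentially. -/
open Finset

lemma catalan_le_four_pow (n : ℕ) : catalan n ≤ 4 ^ n := by
  have h1 : catalan n ≤ n.centralBinom := by
    calc catalan n ≤ (n + 1) * catalan n := Nat.le_mul_of_pos_left _ (by omega)
      _ = n.centralBinom := succ_mul_catalan_eq_centralBinom n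
  refine h1.trans ?_
  have h2 : n.centralBinom ≤ 2 ^ (2 * n) := by
    rw [Nat.centralBinom, ← Nat.sum_range_choose (2 * n)]
    exact Finset.single_le_sum (f := fun i => (2 * n).choose i)
      (fun i _ => Nat.zero_le _) (by simp [Nat.lt_succ_iff]; omega)
  calc n.centralBinom ≤ 2 ^ (2 * n) := h2
    _ = 4 ^ n := by rw [pow_mul]; norm_num

theorem stmt_4 (a : ℕ → ℕ) (h1 : a 1 = 1) (h2 : a 2 = 1)
    (hrec : ∀ n, 3 ≤ n →
      a n = 2 * a (n - 1) + ∑ k ∈ Finset.Icc 2 (n - 1), a (k - 1) * a (n - k)) :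
    ∀ n, 1 ≤ n → a n ≤ 4 ^ n := by
  have key : ∀ n, 1 ≤ n → a n ≤ catalan n := by
    intro n
    induction n using Nat.strong_induction_on with
    | _ n ih =>
      intro hn
      match n, hn with
      | 1, _ => simp [h1, catalan_one]
      | 2, _ => simp [h2, catalan_two]
      | (m + 3), _ =>
        have hr := hrec (m + 3) (by omega)
        norm_num at hr
        -- rewrite the Icc sum as a range sum
        have hsum : ∑ k ∈ Finset.Icc 2 (m + 2), a (k - 1) * a (m + 3 - k)
            = ∑ j ∈ Finset.range (m + 1), a (j + 1) * a (m + 1 - j) := by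
          rw [show Finset.Icc 2 (m+2) = Finset.Ico 2 (m+3) from (Finset.Ico_add_one_right_eq_Icc 2 (m + 2)).symm,
            Finset.sum_Ico_eq_sum_range]
          apply Finset.sum_congr (by congr 1)
          intro j hj
          congr 1 <;> congr 1 <;> omega
        rw [hsum] at hr
        have hcat : catalan (m + 3) = catalan (m + 2)
            + (∑ j ∈ Finset.range (m + 1), catalan (j + 1) * catalan (m + 1 - j)
              + catalan (m + 2)) := by
          rw [show m + 3 = (m + 2) + 1 from rfl, catalan_succ',
            Finset.Nat.sum_antidiagonal_eq_sum_range_succ_mk,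
            Finset.sum_range_succ, Finset.sum_range_succ']
          simp only [Nat.sub_zero, Nat.sub_self, catalan_zero, mul_one, one_mul]
          have heq : ∀ j ∈ Finset.range (m + 1),
              catalan (j + 1) * catalan (m + 2 - (j + 1))
                = catalan (j + 1) * catalan (m + 1 - j) := by
            intro j hj; congr 2; omega
          rw [Finset.sum_congr rfl heq]
          ring
        rw [hr, hcat]
        have hA : a (m + 2) ≤ catalan (m + 2) := ih (m + 2) (by omega) (by omega)
        have hS : ∑ j ∈ Finset.range (m + 1), a (j + 1) * a (m + 1 - j)
            ≤ ∑ j ∈ Finset.range (m + 1), catalan (j + 1) * catalan (m + 1 - j) := by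
          apply Finset.sum_le_sum
          intro j hj
          simp only [Finset.mem_range] at hj
          exact Nat.mul_le_mul
            (ih (j + 1) (by omega) (by omega))
            (ih (m + 1 - j) (by omega) (by omega))
        omega
  intro n hn
  exact (key n hn).trans (catalan_le_four_pow n)
end

section
/- Consider full binary trees with n ≥ 2 labeled leaves 1,…,n. Model the greedy top-down parser as follows: given a uniformly random permutation s of {1,…,n} (the scores), the parser recursively splits each span [i,j] with j−i ≥ 1 at the position k of the maximum score in [i,j]: if k = i it produces children [i,i] and [i+1,j]; if k = j it produces [i,j−1] and [j,j]; otherwise it produces [i,k−1] and [k,j]. Then for every length ℓ with 1 < ℓ < n, the probability that the rightmost span [n−ℓ+1, n] is a constituent of the resulting tree equals twice the probability that the leftmost span [1, ℓ] is a constituent. -/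
/-!
A prefix `[1, ℓ]` can only arise as a left child, and the left child of a span ends just before
the span's maximum; so `[1, ℓ]` is a constituent iff `s (ℓ + 1)` is the largest of
`s 1, …, s (ℓ + 1)`. A suffix `[i, n]` can only arise as a right child, which starts at the
maximum, or just after it when the maximum sits at the left end of the span; so `[i, n]` is a
constituent iff the largest of `s (i - 1), …, s n` sits at `i - 1` or at `i`. For a uniformly
random permutation the position of the maximum on a block of `ℓ + 1` positions is uniform, which
gives the probabilities `1 / (ℓ + 1)` and `2 / (ℓ + 1)`.
-/

inductive Constituent (s : ℕ → ℝ) (n : ℕ) : ℕ → ℕ → Prop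
  | root : Constituent s n 1 n
  | leftChild (i j k : ℕ) :
      Constituent s n i j → i < j → k ∈ Finset.Icc i j →
      (∀ l ∈ Finset.Icc i j, l ≠ k → s l < s k) →
      Constituent s n i (if k = i then i else if k = j then j - 1 else k - 1)
  | rightChild (i j k : ℕ) :
      Constituent s n i j → i < j → k ∈ Finset.Icc i j →
      (∀ l ∈ Finset.Icc i j, l ≠ k → s l < s k) →
      Constituent s n (if k = i then i + 1 else if k = j then j else k) j

noncomputable def scoreOf {n : ℕ} (σ : Equiv.Perm (Fin n)) : ℕ → ℝ :=
  fun i => if h : i - 1 < n then ((σ ⟨i - 1, h⟩ : Fin n) : ℝ) else 0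

open Finset

def IsStrictMaxOn {ι β : Type*} [LT β] (f : ι → β) (S : Finset ι) (a : ι) : Prop :=
  ∀ x ∈ S, x ≠ a → f x < f a

section IsStrictMaxOn

variable {ι β : Type*} {f : ι → β} {S T : Finset ι} {a b : ι}

theorem IsStrictMaxOn.anti [LT β] (h : IsStrictMaxOn f T a) (hST : S ⊆ T) :
    IsStrictMaxOn f S a :=
  fun x hx => h x (hST hx)

theorem IsStrictMaxOn.eq [Preorder β] (ha : IsStrictMaxOn f S a) (hb : IsStrictMaxOn f S b)
    (haS : a ∈ S) (hbS : b ∈ S) : a = b := by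
  by_contra hab
  exact lt_asymm (ha b hbS (Ne.symm hab)) (hb a haS hab)

theorem exists_isStrictMaxOn [LinearOrder β] (hS : S.Nonempty) (hinj : Set.InjOn f S) :
    ∃ a ∈ S, IsStrictMaxOn f S a := by
  obtain ⟨a, haS, hmax⟩ := S.exists_max_image f hS
  exact ⟨a, haS, fun x hx hxa => (hmax x hx).lt_of_ne fun h => hxa (hinj hx haS h)⟩

theorem isStrictMaxOn_comp_iff [LinearOrder β] {γ : Type*} [Preorder γ] {g : β → γ}
    (hg : StrictMono g) : IsStrictMaxOn (g ∘ f) S a ↔ IsStrictMaxOn f S a :=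
  forall₂_congr fun _ _ => imp_congr_right fun _ => hg.lt_iff_lt (a := f _)

theorem isStrictMaxOn_map_iff [LT β] {κ : Type*} {e : κ ↪ ι} {f : ι → β} {S : Finset κ}
    {a : κ} : IsStrictMaxOn f (S.map e) (e a) ↔ IsStrictMaxOn (f ∘ e) S a := by
  simp [IsStrictMaxOn]

theorem card_isStrictMaxOn_or [Preorder β] {γ : Type*} [Finite γ] {g : γ → ι → β}
    (ha : a ∈ S) (hb : b ∈ S) (hab : a ≠ b) :
    Nat.card {x // IsStrictMaxOn (g x) S a ∨ IsStrictMaxOn (g x) S b} =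
      Nat.card {x // IsStrictMaxOn (g x) S a} + Nat.card {x // IsStrictMaxOn (g x) S b} := by
  classical
  rw [Nat.card_congr (subtypeOrEquiv _ _ fun _ hpa hpb x hx =>
    hab ((hpa x hx).eq (hpb x hx) ha hb)), Nat.card_sum]

end IsStrictMaxOn

section Constituent

variable {s : ℕ → ℝ} {n : ℕ}

theorem Constituent.one_le_left_and_right_le {i j : ℕ} (h : Constituent s n i j) :
    1 ≤ i ∧ j ≤ n := by
  induction h with
  | root => omega
  | leftChild i j k _ hij hk _ ih | rightChild i j k _ hij hk _ ih =>
    rw [mem_Icc] at hk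
    split_ifs <;> omega

theorem Constituent.eq_root_or_isStrictMaxOn {i j : ℕ} (h : Constituent s n i j) (hij : i < j) :
    (i = 1 ∧ j = n) ∨ (j < n ∧ IsStrictMaxOn s (Icc i (j + 1)) (j + 1)) ∨
      (1 < i ∧
        (IsStrictMaxOn s (Icc (i - 1) j) (i - 1) ∨ IsStrictMaxOn s (Icc (i - 1) j) i)) := by
  cases h with
  | root => exact .inl ⟨rfl, rfl⟩
  | leftChild i j' k hc _ hk hmax =>
    have := hc.one_le_left_and_right_le
    rw [mem_Icc] at hk
    refine .inr (.inl ?_)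
    split_ifs at hij ⊢ with hki hkj
    · omega
    · subst hkj
      rw [Nat.sub_add_cancel (by omega)]
      exact ⟨by omega, hmax⟩
    · rw [Nat.sub_add_cancel (by omega)]
      exact ⟨by omega, IsStrictMaxOn.anti hmax (Icc_subset_Icc le_rfl (by omega))⟩
  | rightChild i' j k hc _ hk hmax =>
    have := hc.one_le_left_and_right_le
    rw [mem_Icc] at hk
    refine .inr (.inr ?_)
    split_ifs at hij ⊢ with hki hkj
    · subst hki
      rw [Nat.add_sub_cancel]
      exact ⟨by omega, .inl hmax⟩
    · omega
    · exact ⟨by omega, .inr (IsStrictMaxOn.anti hmax (Icc_subset_Icc (by omega) le_rfl))⟩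

theorem Constituent.exists_isStrictMaxOn (hinj : Set.InjOn s (Icc 1 n)) {i j : ℕ}
    (h : Constituent s n i j) (hij : i ≤ j) : ∃ k ∈ Icc i j, IsStrictMaxOn s (Icc i j) k := by
  have := h.one_le_left_and_right_le
  exact _root_.exists_isStrictMaxOn ⟨i, left_mem_Icc.2 hij⟩
    (hinj.mono (coe_subset.2 (Icc_subset_Icc (by omega) (by omega))))

theorem Constituent.prefix_of_isStrictMaxOn (hinj : Set.InjOn s (Icc 1 n)) {i q m : ℕ}
    (hmax : IsStrictMaxOn s (Icc i (q + 1)) (q + 1)) (h : Constituent s n i m) (hiq : i ≤ q)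
    (hqm : q ≤ m) : Constituent s n i q := by
  obtain rfl | hqm := hqm.eq_or_lt
  · exact h
  obtain ⟨k, hk, hkmax⟩ := h.exists_isStrictMaxOn hinj (by omega)
  obtain ⟨hik, hkm⟩ := mem_Icc.1 hk
  have hqk : q < k := by
    by_contra! hkq
    exact lt_asymm (hmax k (mem_Icc.2 ⟨hik, by omega⟩) (by omega))
      (hkmax (q + 1) (mem_Icc.2 ⟨by omega, by omega⟩) (by omega))
  have hchild := h.leftChild i m k (by omega) hk hkmax
  rw [show (if k = i then i else if k = m then m - 1 else k - 1) = k - 1 by split_ifs <;> omega]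
    at hchild
  exact hchild.prefix_of_isStrictMaxOn hinj hmax hiq (by omega)
termination_by m

theorem Constituent.suffix_of_isStrictMaxOn (hinj : Set.InjOn s (Icc 1 n)) {r p : ℕ}
    (hmax : IsStrictMaxOn s (Icc p n) p) (h : Constituent s n r n) (hrp : r ≤ p) (hpn : p < n) :
    Constituent s n p n := by
  obtain rfl | hrp := hrp.eq_or_lt
  · exact h
  obtain ⟨k, hk, hkmax⟩ := h.exists_isStrictMaxOn hinj (by omega)
  obtain ⟨hrk, hkn⟩ := mem_Icc.1 hk
  have hkp : k ≤ p := by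
    by_contra! hpk
    exact lt_asymm (hmax k (mem_Icc.2 ⟨by omega, hkn⟩) (by omega))
      (hkmax p (mem_Icc.2 ⟨by omega, by omega⟩) (by omega))
  have hchild := h.rightChild r n k (by omega) hk hkmax
  rw [show (if k = r then r + 1 else if k = n then n else k) = max (r + 1) k by
    split_ifs <;> omega] at hchild
  exact hchild.suffix_of_isStrictMaxOn hinj hmax (by omega) hpn
termination_by p - r

theorem constituent_prefix_iff (hinj : Set.InjOn s (Icc 1 n)) {ℓ : ℕ} (hℓ : 1 < ℓ)
    (hℓn : ℓ < n) : Constituent s n 1 ℓ ↔ IsStrictMaxOn s (Icc 1 (ℓ + 1)) (ℓ + 1) := by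
  refine ⟨fun h => ?_, fun h =>
    Constituent.root.prefix_of_isStrictMaxOn hinj h (by omega) hℓn.le⟩
  rcases h.eq_root_or_isStrictMaxOn hℓ with ⟨-, rfl⟩ | ⟨-, h⟩ | ⟨h, -⟩
  · exact absurd hℓn (lt_irrefl _)
  · exact h
  · exact absurd h (lt_irrefl _)

theorem constituent_suffix_iff (hinj : Set.InjOn s (Icc 1 n)) {i : ℕ} (hi : 1 < i) (hin : i < n) :
    Constituent s n i n ↔
      IsStrictMaxOn s (Icc (i - 1) n) (i - 1) ∨ IsStrictMaxOn s (Icc (i - 1) n) i := by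
  refine ⟨fun h => ?_, fun h => ?_⟩
  · rcases h.eq_root_or_isStrictMaxOn hin with ⟨rfl, -⟩ | ⟨h, -⟩ | ⟨-, h⟩
    · exact absurd hi (lt_irrefl _)
    · exact absurd h (lt_irrefl _)
    · exact h
  rcases h with h | h
  · have hc := Constituent.root.suffix_of_isStrictMaxOn hinj h (by omega) (by omega)
    have hchild := hc.rightChild (i - 1) n (i - 1) (by omega) (mem_Icc.2 ⟨le_rfl, by omega⟩) h
    rwa [if_pos rfl, Nat.sub_add_cancel hi.le] at hchild
  · exact Constituent.root.suffix_of_isStrictMaxOn hinj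
      (h.anti (Icc_subset_Icc (Nat.sub_le i 1) le_rfl)) hi.le hin

end Constituent

section Counting

open Equiv Nat

variable {α : Type*} [DecidableEq α] [LinearOrder α] {S : Finset α} {a b : α}

theorem IsStrictMaxOn.mul_swap {σ : Perm α} (h : IsStrictMaxOn σ S a) (hb : b ∈ S) :
    IsStrictMaxOn (σ * swap a b : Perm α) S b := by
  intro x hx hxb
  simp only [Perm.mul_apply, swap_apply_right]
  rcases eq_or_ne x a with rfl | hxa
  · rw [swap_apply_left]
    exact h b hb (Ne.symm hxb)
  · rw [swap_apply_of_ne_of_ne hxa hxb]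
    exact h x hx hxa

theorem card_isStrictMaxOn_eq (ha : a ∈ S) (hb : b ∈ S) :
    Nat.card {σ : Perm α // IsStrictMaxOn σ S a} =
      Nat.card {σ : Perm α // IsStrictMaxOn σ S b} :=
  Nat.card_congr <| (Equiv.mulRight (swap a b)).subtypeEquiv fun σ =>
    ⟨fun h => h.mul_swap hb, fun h => by
      simpa [swap_comm a b, mul_assoc] using h.mul_swap (b := a) ha⟩

theorem sum_card_isStrictMaxOn [Fintype α] (hS : S.Nonempty) :
    ∑ a ∈ S, Nat.card {σ : Perm α // IsStrictMaxOn σ S a} = (Fintype.card α)! := by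
  classical
  simp only [Nat.card_eq_fintype_card, Fintype.card_subtype]
  rw [← card_biUnion fun a ha b hb hab => disjoint_filter.2 fun σ _ h h' => hab (h.eq h' ha hb),
    ← Fintype.card_perm, ← Finset.card_univ]
  congr 1
  refine eq_univ_of_forall fun σ => ?_
  obtain ⟨a, ha, hmax⟩ := exists_isStrictMaxOn hS σ.injective.injOn
  exact mem_biUnion.2 ⟨a, ha, mem_filter.2 ⟨mem_univ σ, hmax⟩⟩

theorem card_isStrictMaxOn_mul_card [Fintype α] (ha : a ∈ S) :
    Nat.card {σ : Perm α // IsStrictMaxOn σ S a} * #S = (Fintype.card α)! := by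
  rw [← sum_card_isStrictMaxOn ⟨a, ha⟩, sum_congr rfl fun b hb => card_isStrictMaxOn_eq hb ha,
    sum_const, smul_eq_mul, mul_comm]

end Counting

section ScoreOf

open Equiv Nat

variable {n : ℕ}

theorem scoreOf_injOn (σ : Perm (Fin n)) : Set.InjOn (scoreOf σ) (Icc 1 n) := by
  intro a ha b hb h
  simp only [coe_Icc, Set.mem_Icc] at ha hb
  simp only [scoreOf, dif_pos (show a - 1 < n by omega), dif_pos (show b - 1 < n by omega),
    Nat.cast_inj, Fin.val_inj, σ.injective.eq_iff, Fin.mk.injEq] at h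
  omega

-- Position `x + 1` of `scoreOf σ` holds `σ x`: positions are `1, …, n`, not `0, …, n - 1`.
theorem isStrictMaxOn_scoreOf_iff {σ : Perm (Fin n)} {a b k : Fin n} :
    IsStrictMaxOn (scoreOf σ) (Icc ((a : ℕ) + 1) (b + 1)) (k + 1) ↔
      IsStrictMaxOn σ (Icc a b) k := by
  let e : Fin n ↪ ℕ := Fin.valEmbedding.trans (addRightEmbedding 1)
  have he : Icc ((a : ℕ) + 1) (b + 1) = (Icc a b).map e := by
    rw [← map_map, Fin.map_valEmbedding_Icc, map_add_right_Icc]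
  have hcomp : scoreOf σ ∘ e = (fun x : Fin n => ((x : ℕ) : ℝ)) ∘ σ := by
    ext x
    simp [e, scoreOf]
  rw [he, show (k : ℕ) + 1 = e k from rfl, isStrictMaxOn_map_iff, hcomp,
    isStrictMaxOn_comp_iff fun _ _ h => by simpa using h]

theorem card_isStrictMaxOn_scoreOf_mul {i j k : ℕ} (hi : 1 ≤ i) (hk : k ∈ Icc i j)
    (hj : j ≤ n) :
    Nat.card {σ : Perm (Fin n) // IsStrictMaxOn (scoreOf σ) (Icc i j) k} * (j + 1 - i) = n ! := by
  rw [mem_Icc] at hk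
  obtain ⟨a, rfl⟩ : ∃ a, i = a + 1 := ⟨i - 1, by omega⟩
  obtain ⟨b, rfl⟩ : ∃ b, j = b + 1 := ⟨j - 1, by omega⟩
  obtain ⟨c, rfl⟩ : ∃ c, k = c + 1 := ⟨k - 1, by omega⟩
  have h := card_isStrictMaxOn_mul_card (α := Fin n) (S := Icc ⟨a, by omega⟩ ⟨b, by omega⟩)
    (a := ⟨c, by omega⟩) (mem_Icc.2 ⟨Fin.mk_le_mk.2 (by omega), Fin.mk_le_mk.2 (by omega)⟩)
  rw [Fin.card_Icc, Fintype.card_fin] at h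
  simp_rw [← isStrictMaxOn_scoreOf_iff] at h
  simpa using h

end ScoreOf

theorem stmt_9_general (n ℓ : ℕ) (hℓ1 : 1 < ℓ) (hℓn : ℓ < n) :
    Nat.card {σ : Equiv.Perm (Fin n) // Constituent (scoreOf σ) n (n - ℓ + 1) n} =
      2 * Nat.card {σ : Equiv.Perm (Fin n) // Constituent (scoreOf σ) n 1 ℓ} := by
  have hprefix (σ : Equiv.Perm (Fin n)) := constituent_prefix_iff (scoreOf_injOn σ) hℓ1 hℓn
  have hsuffix (σ : Equiv.Perm (Fin n)) :=
    constituent_suffix_iff (scoreOf_injOn σ) (i := n - ℓ + 1) (by omega) (by omega)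
  simp only [Nat.add_sub_cancel] at hsuffix
  rw [Nat.card_congr (Equiv.subtypeEquivRight hsuffix), Nat.card_congr (Equiv.subtypeEquivRight
    hprefix), card_isStrictMaxOn_or (left_mem_Icc.2 (by omega)) (mem_Icc.2 ⟨by omega, by omega⟩)
    (by omega)]
  have hL := card_isStrictMaxOn_scoreOf_mul (n := n) (i := 1) (j := ℓ + 1) (k := ℓ + 1) le_rfl
    (right_mem_Icc.2 (by omega)) hℓn
  have hR₁ := card_isStrictMaxOn_scoreOf_mul (n := n) (i := n - ℓ) (j := n) (k := n - ℓ)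
    (by omega) (left_mem_Icc.2 (by omega)) le_rfl
  have hR₂ := card_isStrictMaxOn_scoreOf_mul (n := n) (i := n - ℓ) (j := n) (k := n - ℓ + 1)
    (by omega) (mem_Icc.2 ⟨by omega, by omega⟩) le_rfl
  rw [show n + 1 - (n - ℓ) = ℓ + 1 by omega] at hR₁ hR₂
  rw [Nat.add_sub_cancel] at hL
  exact Nat.eq_of_mul_eq_mul_right ℓ.succ_pos (by rw [add_mul, hR₁, hR₂, mul_assoc, hL]; ring)

theorem stmt_9 (n ℓ : ℕ) (hn : 2 ≤ n) (hℓ1 : 1 < ℓ) (hℓn : ℓ < n) :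
    Nat.card {σ : Equiv.Perm (Fin n) // Constituent (scoreOf σ) n (n - ℓ + 1) n} =
      2 * Nat.card {σ : Equiv.Perm (Fin n) // Constituent (scoreOf σ) n 1 ℓ} :=
  stmt_9_general n ℓ hℓ1 hℓn
end

section
/- Under the uniform distribution over full binary trees with n labeled leaves (each of the C(n-1) bracketings equally likely), for every length ℓ with 1 ≤ ℓ ≤ n and every position i with i+ℓ−1 ≤ n such that the span [i, i+ℓ−1] touches a sentence boundary (i = 1 or i+ℓ−1 = n), the probability that [i, i+ℓ−1] is a constituent equals C(ℓ−1)·C(n−ℓ)/C(n−1). In particular, the probability that [1, ℓ] is a constituent equals the probability that [n−ℓ+1, n] is a constituent. -/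
inductive BTree : Type
  | leaf : BTree
  | node : BTree → BTree → BTree

def BTree.leaves : BTree → ℕ
  | .leaf => 1
  | .node l r => l.leaves + r.leaves

/-- Spans (as pairs of word positions, inclusive) of a tree whose leftmost leaf
is at position `i`. -/
def BTree.spansFrom : BTree → ℕ → Finset (ℕ × ℕ)
  | .leaf, i => {(i, i)}
  | .node l r, i =>
      insert (i, i + (BTree.node l r).leaves - 1)
        (l.spansFrom i ∪ r.spansFrom (i + l.leaves))

namespace BTree

lemma leaves_pos (t : BTree) : 1 ≤ t.leaves := by
  induction t with
  | leaf => simp [leaves]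
  | node l r ihl ihr => simp [leaves]; omega

def toTree : BTree → Tree Unit
  | .leaf => .nil
  | .node l r => .node () l.toTree r.toTree

def ofTree : Tree Unit → BTree
  | .nil => .leaf
  | .node _ l r => .node (ofTree l) (ofTree r)

lemma ofTree_toTree (t : BTree) : ofTree t.toTree = t := by
  induction t with
  | leaf => rfl
  | node l r ihl ihr => simp [toTree, ofTree, ihl, ihr]

lemma toTree_ofTree (T : Tree Unit) : toTree (ofTree T) = T := by
  induction T with
  | nil => rfl
  | node a l r ihl ihr => simp [toTree, ofTree, ihl, ihr]

lemma leaves_toTree (t : BTree) : t.leaves = t.toTree.numNodes + 1 := by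
  induction t with
  | leaf => rfl
  | node l r ihl ihr => simp [toTree, leaves, Tree.numNodes, ihl, ihr]; omega

lemma card_leaves_eq (n : ℕ) (hn : 1 ≤ n) :
    Nat.card {t : BTree // t.leaves = n} = catalan (n - 1) := by
  have e : {t : BTree // t.leaves = n} ≃ {T : Tree Unit // T ∈ Tree.treesOfNumNodesEq (n-1)} :=
    { toFun := fun ⟨t, ht⟩ => ⟨t.toTree, by
        rw [BinaryTree.mem_treesOfNumNodesEq]
        have : t.leaves = BinaryTree.numNodes t.toTree + 1 := leaves_toTree t; omega⟩
      invFun := fun ⟨T, hT⟩ => ⟨ofTree T, by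
        rw [BinaryTree.mem_treesOfNumNodesEq] at hT
        have : (ofTree T).leaves = BinaryTree.numNodes (ofTree T).toTree + 1 := leaves_toTree (ofTree T)
        rw [toTree_ofTree] at this; omega⟩
      left_inv := fun ⟨t, ht⟩ => by simp [ofTree_toTree]
      right_inv := fun ⟨T, hT⟩ => by simp [toTree_ofTree] }
  rw [Nat.card_congr e, Nat.card_eq_finsetCard, BinaryTree.treesOfNumNodesEq_card_eq_catalan]

lemma spans_bounds {t : BTree} {i a b : ℕ} (h : (a, b) ∈ t.spansFrom i) :
    i ≤ a ∧ a ≤ b ∧ b + 1 ≤ i + t.leaves := by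
  induction t generalizing i with
  | leaf =>
    simp [spansFrom] at h
    simp [leaves]; omega
  | node l r ihl ihr =>
    have h1 := l.leaves_pos
    have h2 := r.leaves_pos
    simp only [spansFrom, Finset.mem_insert, Finset.mem_union] at h
    rcases h with h | h | h
    · obtain ⟨ha, hb⟩ := Prod.ext_iff.mp h
      simp only [leaves] at *
      omega
    · have := ihl h; simp [leaves]; omega
    · have := ihr h; simp [leaves]; omega

lemma whole_mem (t : BTree) (i : ℕ) : (i, i + t.leaves - 1) ∈ t.spansFrom i := by
  cases t with
  | leaf => simp [spansFrom, leaves]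
  | node l r => simp [spansFrom]

def substL : BTree → BTree → BTree
  | .leaf, s => s
  | .node l r, s => .node (substL l s) r

def substR : BTree → BTree → BTree
  | .leaf, s => s
  | .node l r, s => .node l (substR r s)

lemma leaves_substL (u s : BTree) : (substL u s).leaves + 1 = u.leaves + s.leaves := by
  induction u with
  | leaf => simp [substL, leaves]; omega
  | node l r ihl ihr => simp [substL, leaves]; omega

lemma leaves_substR (u s : BTree) : (substR u s).leaves + 1 = u.leaves + s.leaves := by
  induction u with
  | leaf => simp [substR, leaves]; omega
  | node l r ihl ihr => simp [substR, leaves]; omega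

lemma prefix_mem_substL (u s : BTree) (i : ℕ) :
    (i, i + s.leaves - 1) ∈ (substL u s).spansFrom i := by
  induction u with
  | leaf => exact whole_mem s i
  | node l r ihl ihr =>
    simp only [substL, spansFrom, Finset.mem_insert, Finset.mem_union]
    exact Or.inr (Or.inl ihl)

lemma suffix_mem_substR (u s : BTree) (i : ℕ) :
    (i + (substR u s).leaves - s.leaves, i + (substR u s).leaves - 1)
      ∈ (substR u s).spansFrom i := by
  induction u generalizing i with
  | leaf =>
    have := whole_mem s i
    simp only [substR]
    have hs := s.leaves_pos
    convert whole_mem s i using 2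
    omega
  | node l r ihl ihr =>
    simp only [substR, spansFrom, Finset.mem_insert, Finset.mem_union]
    refine Or.inr (Or.inr ?_)
    have := ihr (i + l.leaves)
    convert this using 2 <;> simp [leaves, substR] <;> omega

lemma substL_inj {u u' s s' : BTree} (hl : s.leaves = s'.leaves)
    (h : substL u s = substL u' s') : u = u' ∧ s = s' := by
  induction u generalizing u' with
  | leaf =>
    cases u' with
    | leaf => exact ⟨rfl, h⟩
    | node a b =>
      exfalso
      simp only [substL] at h
      subst h
      have h1 := leaves_substL a s'
      have h2 := a.leaves_pos
      have h3 := b.leaves_pos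
      simp [leaves] at hl
      omega
  | node l r ih =>
    cases u' with
    | leaf =>
      exfalso
      simp only [substL] at h
      have h1 := leaves_substL l s
      have h2 := l.leaves_pos
      have h3 := r.leaves_pos
      rw [← h] at hl
      simp [leaves] at hl
      omega
    | node a b =>
      simp only [substL, node.injEq] at h
      obtain ⟨h1, rfl⟩ := h
      obtain ⟨rfl, rfl⟩ := ih h1
      exact ⟨rfl, rfl⟩

lemma substR_inj {u u' s s' : BTree} (hl : s.leaves = s'.leaves)
    (h : substR u s = substR u' s') : u = u' ∧ s = s' := by
  induction u generalizing u' with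
  | leaf =>
    cases u' with
    | leaf => exact ⟨rfl, h⟩
    | node a b =>
      exfalso
      simp only [substR] at h
      subst h
      have h1 := leaves_substR b s'
      have h2 := a.leaves_pos
      have h3 := b.leaves_pos
      simp [leaves] at hl
      omega
  | node l r ihl ihr =>
    cases u' with
    | leaf =>
      exfalso
      simp only [substR] at h
      have h1 := leaves_substR r s
      have h2 := l.leaves_pos
      have h3 := r.leaves_pos
      rw [← h] at hl
      simp [leaves] at hl
      omega
    | node a b =>
      simp only [substR, node.injEq] at h
      obtain ⟨rfl, h1⟩ := h
      obtain ⟨rfl, rfl⟩ := ihr h1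
      exact ⟨rfl, rfl⟩

lemma substL_surj {t : BTree} {i ℓ : ℕ} (hℓ : 1 ≤ ℓ)
    (h : (i, i + ℓ - 1) ∈ t.spansFrom i) :
    ∃ u s, s.leaves = ℓ ∧ substL u s = t := by
  induction t generalizing i with
  | leaf =>
    simp [spansFrom] at h
    have : ℓ = 1 := by omega
    exact ⟨.leaf, .leaf, by simp [leaves, this], rfl⟩
  | node l r ihl ihr =>
    by_cases hℓn : ℓ = (node l r).leaves
    · exact ⟨.leaf, node l r, hℓn.symm, rfl⟩
    · have hb := spans_bounds h
      have h1 := l.leaves_pos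
      have h2 := r.leaves_pos
      simp only [spansFrom, Finset.mem_insert, Finset.mem_union] at h
      rcases h with h | h | h
      · exfalso
        rw [Prod.ext_iff] at h
        simp only [leaves] at h hℓn
        omega
      · obtain ⟨u, s, hs, hsub⟩ := ihl h
        exact ⟨.node u r, s, hs, by simp [substL, hsub]⟩
      · exfalso
        have := spans_bounds h
        omega

lemma substR_surj {t : BTree} {i ℓ : ℕ} (hℓ : 1 ≤ ℓ) (hℓm : ℓ ≤ t.leaves)
    (h : (i + t.leaves - ℓ, i + t.leaves - 1) ∈ t.spansFrom i) :
    ∃ u s, s.leaves = ℓ ∧ substR u s = t := by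
  induction t generalizing i with
  | leaf =>
    simp [leaves] at hℓm
    have : ℓ = 1 := by omega
    exact ⟨.leaf, .leaf, by simp [leaves, this], rfl⟩
  | node l r ihl ihr =>
    by_cases hℓn : ℓ = (node l r).leaves
    · exact ⟨.leaf, node l r, hℓn.symm, rfl⟩
    · have h1 := l.leaves_pos
      have h2 := r.leaves_pos
      simp only [leaves] at hℓm hℓn
      simp only [spansFrom, Finset.mem_insert, Finset.mem_union] at h
      rcases h with h | h | h
      · exfalso
        rw [Prod.ext_iff] at h
        simp only [leaves] at h hℓn ⊢
        omega
      · exfalso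
        have := spans_bounds h
        simp [leaves] at this
        omega
      · have hb := spans_bounds h
        have hℓr : ℓ ≤ r.leaves := by simp [leaves] at hb ⊢; omega
        have h' : (i + l.leaves + r.leaves - ℓ, i + l.leaves + r.leaves - 1)
            ∈ r.spansFrom (i + l.leaves) := by
          convert h using 2 <;> simp [leaves] <;> omega
        obtain ⟨u, s, hs, hsub⟩ := ihr hℓr h'
        exact ⟨.node l u, s, hs, by simp [substR, hsub]⟩

end BTree

theorem stmt_11 (n ℓ : ℕ) (hℓ : 1 ≤ ℓ) (hℓn : ℓ ≤ n) :
    Nat.card {t : BTree // t.leaves = n ∧ (1, ℓ) ∈ t.spansFrom 1} =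
      catalan (ℓ - 1) * catalan (n - ℓ) ∧
    Nat.card {t : BTree // t.leaves = n ∧ (n - ℓ + 1, n) ∈ t.spansFrom 1} =
      catalan (ℓ - 1) * catalan (n - ℓ) := by
  have cardP : Nat.card ({s : BTree // s.leaves = ℓ} × {u : BTree // u.leaves = n - ℓ + 1}) =
      catalan (ℓ - 1) * catalan (n - ℓ) := by
    rw [Nat.card_prod, BTree.card_leaves_eq ℓ hℓ, BTree.card_leaves_eq (n - ℓ + 1) (by omega)]
    norm_num
  constructor
  · rw [← cardP]
    symm
    apply Nat.card_congr
    apply Equiv.ofBijective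
      (f := fun p : {s : BTree // s.leaves = ℓ} × {u : BTree // u.leaves = n - ℓ + 1} =>
        (⟨BTree.substL p.2.1 p.1.1, by
          have h1 := BTree.leaves_substL p.2.1 p.1.1
          have h2 := p.1.2
          have h3 := p.2.2
          refine ⟨by omega, ?_⟩
          have := BTree.prefix_mem_substL p.2.1 p.1.1 1
          convert this using 2
          omega⟩ :
          {t : BTree // t.leaves = n ∧ (1, ℓ) ∈ t.spansFrom 1}))
    constructor
    · rintro ⟨⟨s, hs⟩, ⟨u, hu⟩⟩ ⟨⟨s', hs'⟩, ⟨u', hu'⟩⟩ hfe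
      simp only [Subtype.mk.injEq] at hfe
      obtain ⟨rfl, rfl⟩ := BTree.substL_inj (hs.trans hs'.symm) hfe
      rfl
    · rintro ⟨t, ht, hmem⟩
      have hmem' : (1, 1 + ℓ - 1) ∈ t.spansFrom 1 := by
        convert hmem using 2; omega
      obtain ⟨u, s, hsl, hsub⟩ := BTree.substL_surj hℓ hmem'
      have h1 := BTree.leaves_substL u s
      refine ⟨⟨⟨s, hsl⟩, ⟨u, by rw [hsub] at h1; omega⟩⟩, ?_⟩
      simpa using hsub
  · rw [← cardP]
    symm
    apply Nat.card_congr
    apply Equiv.ofBijective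
      (f := fun p : {s : BTree // s.leaves = ℓ} × {u : BTree // u.leaves = n - ℓ + 1} =>
        (⟨BTree.substR p.2.1 p.1.1, by
          have h1 := BTree.leaves_substR p.2.1 p.1.1
          have h2 := p.1.2
          have h3 := p.2.2
          refine ⟨by omega, ?_⟩
          have := BTree.suffix_mem_substR p.2.1 p.1.1 1
          convert this using 2 <;> omega⟩ :
          {t : BTree // t.leaves = n ∧ (n - ℓ + 1, n) ∈ t.spansFrom 1}))
    constructor
    · rintro ⟨⟨s, hs⟩, ⟨u, hu⟩⟩ ⟨⟨s', hs'⟩, ⟨u', hu'⟩⟩ hfe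
      simp only [Subtype.mk.injEq] at hfe
      obtain ⟨rfl, rfl⟩ := BTree.substR_inj (hs.trans hs'.symm) hfe
      rfl
    · rintro ⟨t, ht, hmem⟩
      have hmem' : (1 + t.leaves - ℓ, 1 + t.leaves - 1) ∈ t.spansFrom 1 := by
        convert hmem using 2 <;> omega
      obtain ⟨u, s, hsl, hsub⟩ := BTree.substR_surj hℓ (by omega) hmem'
      have h1 := BTree.leaves_substR u s
      refine ⟨⟨⟨s, hsl⟩, ⟨u, by rw [hsub] at h1; omega⟩⟩, ?_⟩
      simpa using hsub
end

section
/- Model the R-variant greedy parser on distinct scores s_1,…,s_n: it recursively splits each span [i,j] with j > i at k = argmax of s over [i,j], producing children ([i,i],[i+1,j]) if k = i, ([i,j−1],[j,j]) if k = j, and ([i,k−1],[k,j]) otherwise. Then in any tree produced by this parser, whenever a middle split of [i,j] at position k (i < k < j) occurs, the span [k,k] is a constituent and [k+1,j] is a constituent (when k < j). -/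
namespace Constituent

variable {s : ℕ → ℝ} {n i j k : ℕ}

theorem of_maxAt_middle (hc : Constituent s n i j) (hik : i < k) (hkj : k < j)
    (hmax : ∀ l ∈ Finset.Icc i j, l ≠ k → s l < s k) : Constituent s n k j := by
  have h := hc.rightChild i j k (hik.trans hkj) (Finset.mem_Icc.2 ⟨hik.le, hkj.le⟩) hmax
  rwa [if_neg hik.ne', if_neg hkj.ne] at h

theorem self_of_maxAt_left (hc : Constituent s n k j) (hkj : k < j)
    (hmax : ∀ l ∈ Finset.Icc k j, l ≠ k → s l < s k) : Constituent s n k k := by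
  simpa using hc.leftChild k j k hkj (Finset.left_mem_Icc.2 hkj.le) hmax

theorem succ_of_maxAt_left (hc : Constituent s n k j) (hkj : k < j)
    (hmax : ∀ l ∈ Finset.Icc k j, l ≠ k → s l < s k) : Constituent s n (k + 1) j := by
  simpa using hc.rightChild k j k hkj (Finset.left_mem_Icc.2 hkj.le) hmax

end Constituent

theorem stmt_15 (s : ℕ → ℝ) (n : ℕ) (i j k : ℕ)
    (hc : Constituent s n i j) (hik : i < k) (hkj : k < j)
    (hmax : ∀ l ∈ Finset.Icc i j, l ≠ k → s l < s k) :
    Constituent s n k k ∧ Constituent s n (k + 1) j := by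
  have hright : Constituent s n k j := hc.of_maxAt_middle hik hkj hmax
  have hmax_right : ∀ l ∈ Finset.Icc k j, l ≠ k → s l < s k := fun l hl =>
    hmax l (Finset.Icc_subset_Icc_left hik.le hl)
  exact ⟨hright.self_of_maxAt_left hkj hmax_right, hright.succ_of_maxAt_left hkj hmax_right⟩
end
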